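/- Let K be a number field of degree d, S a finite set of prime ideals of O_K, and δ₁,...,δ_r a basis of the S-unit group modulo torsion. Let U be a subset of S ∪ M_K^∞ of size r and let M be the r×r matrix with entries log‖δ_j‖_ν for ν ∈ U, 1 ≤ j ≤ r. Suppose M is invertible and let c be the maximum absolute value of the entries of M^{-1}. If ε = δ₁^{b₁}···δ_r^{b_r} with b₁,...,b_r ∈ ℤ, then max_j |b_j| ≤ 2d·c·h(ε). -/

import Mathlib

open NumberField IsDedekindDomain

/-- The normalized absolute value `‖x‖_ν = |x|_ν^{D_ν}` of `x` at a place `ν` of the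
number field `L`: at an infinite place `w` it is `w(x)^{mult w}`, and at a finite
place `v` (a height-one prime of `𝓞 L`) it is `Norm(𝔭)^{-ord_v x}` (and `0` at `x = 0`). -/
noncomputable def placeNorm (L : Type*) [Field L] [NumberField L] :
    (InfinitePlace L ⊕ HeightOneSpectrum (𝓞 L)) → L → ℝ
  | Sum.inl w => fun x => (w x) ^ w.mult
  | Sum.inr v => fun x =>
      if hx : v.valuation L x = 0 then 0
      else (Ideal.absNorm v.asIdeal : ℝ) ^ (Multiplicative.toAdd (WithZero.unzero hx))

/-- The absolute logarithmic height
`h(x) = (1/[L:ℚ]) ∑_ν log max {1, ‖x‖_ν}`, summing over all places of `L`. -/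
noncomputable def absLogHeight (L : Type*) [Field L] [NumberField L] (x : L) : ℝ :=
  (Module.finrank ℚ L : ℝ)⁻¹ *
    ∑ᶠ ν : InfinitePlace L ⊕ HeightOneSpectrum (𝓞 L),
      Real.log (max 1 (placeNorm L ν x))

/-!
Taking `log ‖·‖_{ν_i}` of `ε = ∏ δ_j ^ b_j` gives `M b = (log ‖ε‖_{ν_i})_i`, hence
`b = M⁻¹ (log ‖ε‖_{ν_i})_i` and `|b_j| ≤ c ∑_i |log ‖ε‖_{ν_i}|`. Since
`|log t| = log⁺ t + log⁺ t⁻¹` and the `ν_i` are distinct places, the last sum is at most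
`d h(ε) + d h(ε⁻¹)`, and `h(ε⁻¹) = h(ε)` by the product formula.
-/

open Function Real

lemma Real.abs_log_eq_posLog_add_posLog_inv (x : ℝ) : |log x| = log⁺ x + log⁺ x⁻¹ := by
  rw [posLog_apply, posLog_apply, log_inv]
  rcases le_total 0 (log x) with h | h
  · simp [abs_of_nonneg h, h]
  · simp [abs_of_nonpos h, h]

lemma finsum_sum_type {α β M : Type*} [AddCommMonoid M] {f : α ⊕ β → M}
    (hl : (support fun a ↦ f (Sum.inl a)).Finite) (hr : (support fun b ↦ f (Sum.inr b)).Finite) :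
    ∑ᶠ x, f x = ∑ᶠ a, f (Sum.inl a) + ∑ᶠ b, f (Sum.inr b) := by
  rw [finsum_eq_sum_of_support_subset _ (s := hl.toFinset) (by simp),
    finsum_eq_sum_of_support_subset _ (s := hr.toFinset) (by simp),
    ← Finset.sum_disjSum]
  refine finsum_eq_sum_of_support_subset f ?_
  rintro (a | b) h <;> simpa using h

lemma finite_support_sum_type {α β M : Type*} [Zero M] {f : α ⊕ β → M}
    (hl : (support fun a ↦ f (Sum.inl a)).Finite) (hr : (support fun b ↦ f (Sum.inr b)).Finite) :
    (support f).Finite := by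
  refine (hl.toFinset.disjSum hr.toFinset).finite_toSet.subset ?_
  rintro (a | b) h <;> simpa using h

lemma sum_comp_le_finsum_of_injective {ι α M : Type*} [Fintype ι] [AddCommMonoid M]
    [PartialOrder M] [IsOrderedAddMonoid M] {e : ι → α} (he : Injective e) {g : α → M}
    (hg : (support g).Finite) (hg₀ : 0 ≤ g) :
    ∑ i, g (e i) ≤ ∑ᶠ a, g a := by
  classical
  rw [finsum_eq_sum_of_support_subset g (s := hg.toFinset ∪ Finset.univ.image e) (by simp),
    ← Finset.sum_image he.injOn]
  exact Finset.sum_le_sum_of_subset_of_nonneg Finset.subset_union_right fun a _ _ ↦ hg₀ a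

open Matrix in
lemma Matrix.abs_le_mul_sum_abs_of_mulVec_eq {n 𝕜 : Type*} [Fintype n] [DecidableEq n]
    [Field 𝕜] [LinearOrder 𝕜] [IsStrictOrderedRing 𝕜] {A : Matrix n n 𝕜} (hA : IsUnit A.det)
    {c : 𝕜} (hc : ∀ i j, |A⁻¹ i j| ≤ c) {x y : n → 𝕜} (h : A *ᵥ x = y) (j : n) :
    |x j| ≤ c * ∑ i, |y i| := by
  have hx : x = A⁻¹ *ᵥ y := by
    rw [← h, mulVec_mulVec, nonsing_inv_mul A hA, one_mulVec]
  calc |x j| = |∑ i, A⁻¹ j i * y i| := by rw [hx]; rfl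
    _ ≤ ∑ i, |A⁻¹ j i| * |y i| := by
      simpa only [abs_mul] using Finset.abs_sum_le_sum_abs (fun i ↦ A⁻¹ j i * y i) .univ
    _ ≤ c * ∑ i, |y i| := by
      rw [Finset.mul_sum]
      exact Finset.sum_le_sum fun i _ ↦ mul_le_mul_of_nonneg_right (hc j i) (abs_nonneg _)

section placeNorm

variable {K : Type*} [Field K] [NumberField K]

lemma placeNorm_inl (w : InfinitePlace K) (x : K) :
    placeNorm K (Sum.inl w) x = w x ^ w.mult := rfl

lemma placeNorm_inr (v : HeightOneSpectrum (𝓞 K)) (x : K) :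
    placeNorm K (Sum.inr v) x = FinitePlace.mk v x := by
  rw [FinitePlace.mk_apply, FinitePlace.norm_embedding,
    NumberField.HeightOneSpectrum.adicAbv_def]
  by_cases hx : v.valuation K x = 0
  · simp [placeNorm, hx]
  · simp [placeNorm, hx, WithZeroMulInt.toNNReal_neg_apply]

variable (K) in
noncomputable def placeNormHom (ν : InfinitePlace K ⊕ HeightOneSpectrum (𝓞 K)) : K →*₀ ℝ where
  toFun := placeNorm K ν
  map_zero' := by cases ν <;> simp [placeNorm_inl, placeNorm_inr]
  map_one' := by cases ν <;> simp [placeNorm_inl, placeNorm_inr]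
  map_mul' x y := by cases ν <;> simp [placeNorm_inl, placeNorm_inr, mul_pow]

@[simp]
lemma placeNormHom_apply (ν : InfinitePlace K ⊕ HeightOneSpectrum (𝓞 K)) (x : K) :
    placeNormHom K ν x = placeNorm K ν x := rfl

lemma placeNorm_nonneg (ν : InfinitePlace K ⊕ HeightOneSpectrum (𝓞 K)) (x : K) :
    0 ≤ placeNorm K ν x := by
  cases ν <;> simp [placeNorm_inl, placeNorm_inr]

lemma placeNorm_pos (ν : InfinitePlace K ⊕ HeightOneSpectrum (𝓞 K)) {x : K} (hx : x ≠ 0) :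
    0 < placeNorm K ν x := by
  cases ν <;> simp [placeNorm_inl, placeNorm_inr, hx, InfinitePlace.pos_iff]

lemma placeNorm_inv (ν : InfinitePlace K ⊕ HeightOneSpectrum (𝓞 K)) (x : K) :
    placeNorm K ν x⁻¹ = (placeNorm K ν x)⁻¹ :=
  map_inv₀ (placeNormHom K ν) x

lemma log_placeNorm_prod_zpow {ι : Type*} [Fintype ι]
    (ν : InfinitePlace K ⊕ HeightOneSpectrum (𝓞 K)) (u : ι → Kˣ) (b : ι → ℤ) :
    log (placeNorm K ν (∏ i, (u i : K) ^ b i)) = ∑ i, b i * log (placeNorm K ν (u i)) := by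
  have hu i : placeNormHom K ν (u i) ≠ 0 := (placeNorm_pos ν (u i).ne_zero).ne'
  simp_rw [← placeNormHom_apply, map_prod, map_zpow₀]
  rw [log_prod fun i _ ↦ zpow_ne_zero _ (hu i)]
  simp_rw [log_zpow]

end placeNorm

section height

variable {K : Type*} [Field K] [NumberField K]

lemma finite_support_posLog_placeNorm_inr (x : K) :
    (support fun v ↦ log⁺ (placeNorm K (Sum.inr v) x)).Finite := by
  simp only [placeNorm_inr]
  rcases eq_or_ne x 0 with rfl | hx
  · simp
  refine (FinitePlace.hasFiniteMulSupport hx).preimage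
    (FinitePlace.equivHeightOneSpectrum.symm.injective.injOn) |>.subset fun v hv ↦ ?_
  contrapose hv
  simp_all [FinitePlace.equivHeightOneSpectrum]

lemma finite_support_posLog_placeNorm (x : K) :
    (support fun ν ↦ log⁺ (placeNorm K ν x)).Finite :=
  finite_support_sum_type (Set.toFinite _) (finite_support_posLog_placeNorm_inr x)

lemma finsum_posLog_placeNorm (x : K) :
    ∑ᶠ ν, log⁺ (placeNorm K ν x) = Height.logHeight₁ x := by
  rw [NumberField.logHeight₁_eq,
    finsum_sum_type (Set.toFinite _) (finite_support_posLog_placeNorm_inr x),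
    finsum_eq_sum_of_fintype]
  simp only [placeNorm_inl, placeNorm_inr, posLog_pow]
  congr 1
  exact finsum_comp_equiv FinitePlace.equivHeightOneSpectrum.symm (f := fun w ↦ log⁺ (w x))

lemma finrank_mul_absLogHeight (x : K) :
    (Module.finrank ℚ K : ℝ) * absLogHeight K x = Height.logHeight₁ x := by
  rw [absLogHeight, mul_inv_cancel_left₀ (Nat.cast_pos.mpr Module.finrank_pos).ne',
    ← finsum_posLog_placeNorm]
  exact finsum_congr fun ν ↦ (posLog_eq_log_max_one (placeNorm_nonneg ν x)).symm

lemma absLogHeight_inv (x : K) : absLogHeight K x⁻¹ = absLogHeight K x := by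
  have hd : (Module.finrank ℚ K : ℝ) ≠ 0 := (Nat.cast_pos.mpr Module.finrank_pos).ne'
  rw [← mul_right_inj' hd, finrank_mul_absLogHeight, finrank_mul_absLogHeight,
    Height.logHeight₁_inv]

lemma sum_abs_log_placeNorm_le {ι : Type*} [Fintype ι]
    {ν : ι → InfinitePlace K ⊕ HeightOneSpectrum (𝓞 K)} (hν : Injective ν) (x : K) :
    ∑ i, |log (placeNorm K (ν i) x)| ≤ 2 * Module.finrank ℚ K * absLogHeight K x := by
  have sum_posLog_le (y : K) :
      ∑ i, log⁺ (placeNorm K (ν i) y) ≤ Module.finrank ℚ K * absLogHeight K y := by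
    rw [finrank_mul_absLogHeight, ← finsum_posLog_placeNorm]
    exact sum_comp_le_finsum_of_injective hν (finite_support_posLog_placeNorm y)
      fun _ ↦ posLog_nonneg
  calc ∑ i, |log (placeNorm K (ν i) x)|
      = ∑ i, log⁺ (placeNorm K (ν i) x) + ∑ i, log⁺ (placeNorm K (ν i) x⁻¹) := by
        simp only [placeNorm_inv, ← Finset.sum_add_distrib, abs_log_eq_posLog_add_posLog_inv]
    _ ≤ Module.finrank ℚ K * absLogHeight K x + Module.finrank ℚ K * absLogHeight K x⁻¹ :=
        add_le_add (sum_posLog_le x) (sum_posLog_le x⁻¹)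
    _ = 2 * Module.finrank ℚ K * absLogHeight K x := by rw [absLogHeight_inv]; ring

end height

theorem exponent_bound_from_height_general (K : Type*) [Field K] [NumberField K]
    (S : Set (HeightOneSpectrum (𝓞 K))) (r : ℕ) (δ : Fin r → (S.unit K))
    (ν : Fin r → (InfinitePlace K ⊕ HeightOneSpectrum (𝓞 K)))
    (hνinj : Function.Injective ν)
    (M : Matrix (Fin r) (Fin r) ℝ)
    (hM : ∀ i j, M i j = Real.log (placeNorm K (ν i) (((δ j : Kˣ) : K))))
    (hMinv : IsUnit M.det)
    (c : ℝ) (hc : ∀ i j, |M⁻¹ i j| ≤ c)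
    (b : Fin r → ℤ) (ε : K) (hε : ε = ∏ i, (((δ i : Kˣ) : K)) ^ (b i)) :
    ∀ j, |(b j : ℝ)| ≤ 2 * (Module.finrank ℚ K) * c * absLogHeight K ε := by
  intro j
  have hMb : M.mulVec (fun k ↦ (b k : ℝ)) = fun i ↦ log (placeNorm K (ν i) ε) := by
    ext i
    simp only [Matrix.mulVec, dotProduct, hM, hε, log_placeNorm_prod_zpow, mul_comm]
  calc |(b j : ℝ)| ≤ c * ∑ i, |log (placeNorm K (ν i) ε)| :=
        Matrix.abs_le_mul_sum_abs_of_mulVec_eq hMinv hc hMb j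
    _ ≤ c * (2 * Module.finrank ℚ K * absLogHeight K ε) :=
        mul_le_mul_of_nonneg_left (sum_abs_log_placeNorm_le hνinj ε)
          ((abs_nonneg _).trans (hc j j))
    _ = 2 * Module.finrank ℚ K * c * absLogHeight K ε := by ring

/-- Let `δ₁,…,δ_r` be a basis of the `S`-unit group modulo torsion, `U = {ν₁,…,ν_r}`
a set of `r` places contained in `S ∪ M_K^∞`, and `M` the invertible `r×r` matrix with
entries `log ‖δ_j‖_{ν_i}`. If `c` bounds the absolute values of the entries of `M⁻¹`
and `ε = δ₁^{b₁} ··· δ_r^{b_r}`, then `max_j |b_j| ≤ 2d·c·h(ε)`. -/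
theorem exponent_bound_from_height (K : Type*) [Field K] [NumberField K]
    (S : Set (HeightOneSpectrum (𝓞 K))) (r : ℕ) (δ : Fin r → (S.unit K))
    (hδ : ∀ x : (S.unit K), ∃! a : Fin r → ℤ,
      x * (∏ i, δ i ^ a i)⁻¹ ∈ CommGroup.torsion (S.unit K))
    (ν : Fin r → (InfinitePlace K ⊕ HeightOneSpectrum (𝓞 K)))
    (hνinj : Function.Injective ν)
    (hνS : ∀ i v, ν i = Sum.inr v → v ∈ S)
    (M : Matrix (Fin r) (Fin r) ℝ)
    (hM : ∀ i j, M i j = Real.log (placeNorm K (ν i) (((δ j : Kˣ) : K))))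
    (hMinv : IsUnit M.det)
    (c : ℝ) (hc : ∀ i j, |M⁻¹ i j| ≤ c)
    (b : Fin r → ℤ) (ε : K) (hε : ε = ∏ i, (((δ i : Kˣ) : K)) ^ (b i)) :
    ∀ j, |(b j : ℝ)| ≤ 2 * (Module.finrank ℚ K) * c * absLogHeight K ε :=
  exponent_bound_from_height_general K S r δ ν hνinj M hM hMinv c hc b ε hε
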